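/- Let 0 < λ ≤ Λ. There exists a constant C > 0 depending only on λ and Λ such that for all measurable a, b : (0,1) → ℝ with λ ≤ a, b ≤ Λ a.e., writing A := 1/a, B := 1/b, γ_A, γ_B as above and E'(x) := B(x)(x - γ_B) - A(x)(x - γ_A), one has for every ρ > 0: ∫₀¹ (A(x) - B(x))² dx ≤ (C/ρ²)·(∫₀¹ E'(x)² dx)^{2/3} + 8 λ^{-2} ρ. -/

import Mathlib

/-!
Everything rests on the identity `(A - B)(x - γ_A) = B (γ_A - γ_B) - E'`. Outside the window
`|x - γ_A| < d` it bounds `(A - B)²` by `2 (B² (γ_A - γ_B)² + E'²) / d²`, and inside the window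
`(A - B)² ≤ λ⁻²`, which costs `2 d λ⁻²`. The gap `|γ_A - γ_B|` is itself controlled by `E'`:
strictly between `γ_A` and `γ_B` the two terms of `E'` have the same sign, so
`|E'| ≥ Λ⁻¹ |γ_A - γ_B|` there and `Λ⁻² |γ_A - γ_B|³ ≤ ∫ E'²`. Taking `d = 4ρ`, and using
`∫ E'² ≤ 4 λ⁻²` to trade `∫ E'²` for `(∫ E'²)^{2/3}`, gives the estimate.
-/

open MeasureTheory Real Set

/-- The constant `γ_A = (∫₀¹ t A(t) dt) / (∫₀¹ A(t) dt)`. -/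
noncomputable def gammaOf (A : ℝ → ℝ) : ℝ :=
  (∫ t in (0:ℝ)..1, t * A t) / (∫ t in (0:ℝ)..1, A t)

/-- With `A = 1/a` and `B = 1/b` this is `E' = u_a' - u_b'`. -/
noncomputable def derivDiff (A B : ℝ → ℝ) (x : ℝ) : ℝ :=
  B x * (x - gammaOf B) - A x * (x - gammaOf A)

lemma intervalIntegral_eq_setIntegral_Ioo {a b : ℝ} (hab : a ≤ b) (f : ℝ → ℝ) :
    ∫ x in a..b, f x = ∫ x in Ioo a b, f x := by
  rw [intervalIntegral.integral_of_le hab, integral_Ioc_eq_integral_Ioo]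

lemma volume_real_uIoo (a b : ℝ) : volume.real (uIoo a b) = |a - b| := by
  rw [uIoo, Real.volume_real_Ioo_of_le inf_le_sup]
  exact max_sub_min_eq_abs' a b

lemma sq_le_rpow_two_thirds_of_pow_three_le {w J : ℝ} (hw : 0 ≤ w) (h : w ^ 3 ≤ J) :
    w ^ 2 ≤ J ^ ((2:ℝ) / 3) :=
  calc w ^ 2 = (w ^ 3) ^ ((2:ℝ) / 3) := by
        rw [← rpow_natCast w 3, ← rpow_mul hw]; norm_num
    _ ≤ J ^ ((2:ℝ) / 3) := rpow_le_rpow (by positivity) h (by norm_num)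

lemma le_rpow_one_third_mul_rpow_two_thirds {I M : ℝ} (hI : 0 ≤ I) (h : I ≤ M) :
    I ≤ M ^ ((1:ℝ) / 3) * I ^ ((2:ℝ) / 3) :=
  calc I = I ^ ((1:ℝ) / 3) * I ^ ((2:ℝ) / 3) := by
        rw [← rpow_add' hI (by norm_num)]; norm_num
    _ ≤ M ^ ((1:ℝ) / 3) * I ^ ((2:ℝ) / 3) := by gcongr

lemma gammaOf_mem_Icc {A : ℝ → ℝ} (hA : IntegrableOn A (Ioo 0 1))
    (hA0 : ∀ᵐ x ∂volume.restrict (Ioo (0:ℝ) 1), 0 ≤ A x) : gammaOf A ∈ Icc 0 1 := by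
  have hmem : ∀ᵐ x ∂volume.restrict (Ioo (0:ℝ) 1), x ∈ Ioo (0:ℝ) 1 :=
    ae_restrict_mem measurableSet_Ioo
  have htA : IntegrableOn (fun t => t * A t) (Ioo 0 1) := by
    refine hA.bdd_mul (c := 1) (by fun_prop) ?_
    filter_upwards [hmem] with x hx
    rw [norm_eq_abs, abs_le]
    constructor <;> linarith [hx.1, hx.2]
  have hnum : 0 ≤ ∫ t in (0:ℝ)..1, t * A t := by
    rw [intervalIntegral_eq_setIntegral_Ioo zero_le_one]
    refine integral_nonneg_of_ae ?_
    filter_upwards [hA0, hmem] with x hx hxm using mul_nonneg hxm.1.le hx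
  have hle : ∫ t in (0:ℝ)..1, t * A t ≤ ∫ t in (0:ℝ)..1, A t := by
    simp only [intervalIntegral_eq_setIntegral_Ioo zero_le_one]
    refine integral_mono_ae htA hA ?_
    filter_upwards [hA0, hmem] with x hx hxm using mul_le_of_le_one_left hx hxm.2.le
  exact ⟨div_nonneg hnum (hnum.trans hle), div_le_one_of_le₀ hle (hnum.trans hle)⟩

section

variable {l L : ℝ} {A B : ℝ → ℝ}

lemma integrableOn_Ioo_of_ae_bounds (hA : Measurable A)
    (hAb : ∀ᵐ x ∂volume.restrict (Ioo (0:ℝ) 1), 0 ≤ A x ∧ A x ≤ L) :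
    IntegrableOn A (Ioo 0 1) :=
  Integrable.of_bound hA.aestronglyMeasurable L <| by
    filter_upwards [hAb] with x hx using abs_le.2 ⟨by linarith [hx.1, hx.2], hx.2⟩

lemma gammaOf_mem_Icc_of_ae_bounds (hA : Measurable A)
    (hAb : ∀ᵐ x ∂volume.restrict (Ioo (0:ℝ) 1), 0 ≤ A x ∧ A x ≤ L) : gammaOf A ∈ Icc 0 1 :=
  gammaOf_mem_Icc (integrableOn_Ioo_of_ae_bounds hA hAb) (hAb.mono fun _ hx => hx.1)

lemma measurable_derivDiff (hA : Measurable A) (hB : Measurable B) :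
    Measurable (derivDiff A B) := by
  unfold derivDiff; fun_prop

lemma abs_derivDiff_le {x : ℝ} (hA : 0 ≤ A x ∧ A x ≤ L) (hB : 0 ≤ B x ∧ B x ≤ L)
    (hx : x ∈ Icc (0:ℝ) 1) (hγA : gammaOf A ∈ Icc 0 1) (hγB : gammaOf B ∈ Icc 0 1) :
    |derivDiff A B x| ≤ 2 * L := by
  have bound {C γ : ℝ} (hC : 0 ≤ C ∧ C ≤ L) (hγ : γ ∈ Icc (0:ℝ) 1) : |C * (x - γ)| ≤ L := by
    rw [abs_mul, abs_of_nonneg hC.1]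
    have : |x - γ| ≤ 1 := abs_le.2 ⟨by linarith [hx.1, hγ.2], by linarith [hx.2, hγ.1]⟩
    nlinarith [abs_nonneg (x - γ)]
  calc |derivDiff A B x| ≤ |B x * (x - gammaOf B)| + |A x * (x - gammaOf A)| := abs_sub _ _
    _ ≤ 2 * L := by linarith [bound hB hγB, bound hA hγA]

lemma ae_abs_derivDiff_le (hA : Measurable A) (hB : Measurable B)
    (hAb : ∀ᵐ x ∂volume.restrict (Ioo (0:ℝ) 1), 0 ≤ A x ∧ A x ≤ L)
    (hBb : ∀ᵐ x ∂volume.restrict (Ioo (0:ℝ) 1), 0 ≤ B x ∧ B x ≤ L) :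
    ∀ᵐ x ∂volume.restrict (Ioo (0:ℝ) 1), |derivDiff A B x| ≤ 2 * L := by
  filter_upwards [hAb, hBb, ae_restrict_mem measurableSet_Ioo] with x hxA hxB hx
  exact abs_derivDiff_le hxA hxB (Ioo_subset_Icc_self hx)
    (gammaOf_mem_Icc_of_ae_bounds hA hAb) (gammaOf_mem_Icc_of_ae_bounds hB hBb)

lemma integrableOn_derivDiff_sq (hA : Measurable A) (hB : Measurable B)
    (hAb : ∀ᵐ x ∂volume.restrict (Ioo (0:ℝ) 1), 0 ≤ A x ∧ A x ≤ L)
    (hBb : ∀ᵐ x ∂volume.restrict (Ioo (0:ℝ) 1), 0 ≤ B x ∧ B x ≤ L) :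
    IntegrableOn (fun x => derivDiff A B x ^ 2) (Ioo 0 1) :=
  Integrable.of_bound ((measurable_derivDiff hA hB).pow_const 2).aestronglyMeasurable
    ((2 * L) ^ 2) <| by
      filter_upwards [ae_abs_derivDiff_le hA hB hAb hBb] with x hx
      rw [norm_pow, norm_eq_abs]
      exact pow_le_pow_left₀ (abs_nonneg _) hx 2

lemma integral_derivDiff_sq_le (hA : Measurable A) (hB : Measurable B)
    (hAb : ∀ᵐ x ∂volume.restrict (Ioo (0:ℝ) 1), 0 ≤ A x ∧ A x ≤ L)
    (hBb : ∀ᵐ x ∂volume.restrict (Ioo (0:ℝ) 1), 0 ≤ B x ∧ B x ≤ L) :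
    ∫ x in Ioo (0:ℝ) 1, derivDiff A B x ^ 2 ≤ 4 * L ^ 2 :=
  calc ∫ x in Ioo (0:ℝ) 1, derivDiff A B x ^ 2 ≤ ∫ _ in Ioo (0:ℝ) 1, (2 * L) ^ 2 := by
        refine integral_mono_ae (integrableOn_derivDiff_sq hA hB hAb hBb) (integrable_const _) ?_
        filter_upwards [ae_abs_derivDiff_le hA hB hAb hBb] with x hx
        rw [← sq_abs]
        exact pow_le_pow_left₀ (abs_nonneg _) hx 2
    _ = 4 * L ^ 2 := by
        rw [setIntegral_const, Real.volume_real_Ioo_of_le zero_le_one]; ring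

lemma mul_abs_gammaOf_sub_le_abs_derivDiff {x : ℝ} (hA : l ≤ A x) (hB : l ≤ B x)
    (hx : x ∈ uIoo (gammaOf A) (gammaOf B)) :
    l * |gammaOf A - gammaOf B| ≤ |derivDiff A B x| := by
  unfold derivDiff
  rcases le_total (gammaOf A) (gammaOf B) with h | h
  · rw [uIoo, inf_eq_left.2 h, sup_eq_right.2 h] at hx
    rw [abs_of_nonpos (sub_nonpos.2 h), ← abs_neg]
    refine le_abs.2 (Or.inl ?_)
    nlinarith [hx.1, hx.2]
  · rw [uIoo, inf_eq_right.2 h, sup_eq_left.2 h] at hx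
    rw [abs_of_nonneg (sub_nonneg.2 h)]
    refine le_abs.2 (Or.inl ?_)
    nlinarith [hx.1, hx.2]

lemma sq_mul_abs_gammaOf_sub_pow_three_le (hl : 0 ≤ l) (hA : Measurable A) (hB : Measurable B)
    (hAb : ∀ᵐ x ∂volume.restrict (Ioo (0:ℝ) 1), l ≤ A x ∧ A x ≤ L)
    (hBb : ∀ᵐ x ∂volume.restrict (Ioo (0:ℝ) 1), l ≤ B x ∧ B x ≤ L) :
    l ^ 2 * |gammaOf A - gammaOf B| ^ 3 ≤ ∫ x in Ioo (0:ℝ) 1, derivDiff A B x ^ 2 := by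
  have hAb' := hAb.mono fun _ h => And.intro (hl.trans h.1) h.2
  have hBb' := hBb.mono fun _ h => And.intro (hl.trans h.1) h.2
  have hγA := gammaOf_mem_Icc_of_ae_bounds hA hAb'
  have hγB := gammaOf_mem_Icc_of_ae_bounds hB hBb'
  have hsub : uIoo (gammaOf A) (gammaOf B) ⊆ Ioo 0 1 := fun x hx =>
    ⟨(le_inf hγA.1 hγB.1).trans_lt hx.1, hx.2.trans_le (sup_le hγA.2 hγB.2)⟩
  have hE := integrableOn_derivDiff_sq hA hB hAb' hBb'
  have hlow : ∀ᵐ x ∂volume.restrict (uIoo (gammaOf A) (gammaOf B)),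
      (l * |gammaOf A - gammaOf B|) ^ 2 ≤ derivDiff A B x ^ 2 := by
    filter_upwards [ae_restrict_of_ae_restrict_of_subset hsub hAb,
      ae_restrict_of_ae_restrict_of_subset hsub hBb, ae_restrict_mem measurableSet_Ioo]
      with x hxA hxB hx
    rw [← sq_abs (derivDiff A B x)]
    exact pow_le_pow_left₀ (by positivity) (mul_abs_gammaOf_sub_le_abs_derivDiff hxA.1 hxB.1 hx) 2
  calc l ^ 2 * |gammaOf A - gammaOf B| ^ 3
      = ∫ _ in uIoo (gammaOf A) (gammaOf B), (l * |gammaOf A - gammaOf B|) ^ 2 := by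
        rw [setIntegral_const, volume_real_uIoo, smul_eq_mul]; ring
    _ ≤ ∫ x in uIoo (gammaOf A) (gammaOf B), derivDiff A B x ^ 2 :=
        integral_mono_of_nonneg (ae_of_all _ fun _ => sq_nonneg _) (hE.mono_set hsub) hlow
    _ ≤ ∫ x in Ioo (0:ℝ) 1, derivDiff A B x ^ 2 :=
        setIntegral_mono_set hE (ae_of_all _ fun _ => sq_nonneg _) hsub.eventuallyLE

lemma sq_sub_mul_sq_le {x d : ℝ} (hd : 0 ≤ d) (hx : d ≤ |x - gammaOf A|) :
    (A x - B x) ^ 2 * d ^ 2 ≤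
      2 * (B x ^ 2 * (gammaOf A - gammaOf B) ^ 2 + derivDiff A B x ^ 2) := by
  have key : (A x - B x) * (x - gammaOf A) =
      B x * (gammaOf A - gammaOf B) - derivDiff A B x := by
    unfold derivDiff; ring
  have hd2 : d ^ 2 ≤ (x - gammaOf A) ^ 2 := by
    rw [← sq_abs (x - gammaOf A)]; exact pow_le_pow_left₀ hd hx 2
  calc (A x - B x) ^ 2 * d ^ 2 ≤ (A x - B x) ^ 2 * (x - gammaOf A) ^ 2 :=
        mul_le_mul_of_nonneg_left hd2 (sq_nonneg _)
    _ = (B x * (gammaOf A - gammaOf B) - derivDiff A B x) ^ 2 := by rw [← mul_pow, key]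
    _ ≤ 2 * (B x ^ 2 * (gammaOf A - gammaOf B) ^ 2 + derivDiff A B x ^ 2) := by
        nlinarith [sq_nonneg (B x * (gammaOf A - gammaOf B) + derivDiff A B x)]

lemma integral_sq_sub_le {d : ℝ} (hd : 0 < d) (hA : Measurable A) (hB : Measurable B)
    (hAb : ∀ᵐ x ∂volume.restrict (Ioo (0:ℝ) 1), 0 ≤ A x ∧ A x ≤ L)
    (hBb : ∀ᵐ x ∂volume.restrict (Ioo (0:ℝ) 1), 0 ≤ B x ∧ B x ≤ L) :
    ∫ x in Ioo (0:ℝ) 1, (A x - B x) ^ 2 ≤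
      2 / d ^ 2 * (L ^ 2 * (gammaOf A - gammaOf B) ^ 2 + ∫ x in Ioo (0:ℝ) 1, derivDiff A B x ^ 2)
        + 2 * d * L ^ 2 := by
  set w := gammaOf A - gammaOf B
  set S := Ioo (gammaOf A - d) (gammaOf A + d)
  have hE := integrableOn_derivDiff_sq hA hB hAb hBb
  have hfar : IntegrableOn (fun x => 2 / d ^ 2 * (L ^ 2 * w ^ 2 + derivDiff A B x ^ 2))
      (Ioo 0 1) :=
    ((integrable_const _).add hE).const_mul _
  have hnear : IntegrableOn (S.indicator fun _ => L ^ 2) (Ioo 0 1) :=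
    (integrable_const _).indicator measurableSet_Ioo
  have hS : (volume.restrict (Ioo (0:ℝ) 1)).real S ≤ 2 * d := by
    rw [measureReal_restrict_apply measurableSet_Ioo]
    refine (measureReal_mono inter_subset_left measure_Ioo_lt_top.ne).trans_eq ?_
    rw [Real.volume_real_Ioo_of_le (by linarith)]; ring
  have hpt : ∀ᵐ x ∂volume.restrict (Ioo (0:ℝ) 1), (A x - B x) ^ 2 ≤
      2 / d ^ 2 * (L ^ 2 * w ^ 2 + derivDiff A B x ^ 2) + S.indicator (fun _ => L ^ 2) x := by
    filter_upwards [hAb, hBb] with x hxA hxB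
    by_cases hx : x ∈ S
    · rw [indicator_of_mem hx]
      have : 0 ≤ 2 / d ^ 2 * (L ^ 2 * w ^ 2 + derivDiff A B x ^ 2) := by positivity
      have : (A x - B x) ^ 2 ≤ L ^ 2 :=
        sq_le_sq' (by linarith [hxA.1, hxB.2]) (by linarith [hxA.2, hxB.1])
      linarith
    · rw [indicator_of_notMem hx, add_zero, div_mul_eq_mul_div, le_div_iff₀ (by positivity)]
      have hdx : d ≤ |x - gammaOf A| := by
        by_contra! h
        exact hx ⟨by linarith [(abs_lt.1 h).1], by linarith [(abs_lt.1 h).2]⟩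
      have hBL : B x ^ 2 * w ^ 2 ≤ L ^ 2 * w ^ 2 :=
        mul_le_mul_of_nonneg_right (pow_le_pow_left₀ hxB.1 hxB.2 2) (sq_nonneg _)
      linarith [sq_sub_mul_sq_le (B := B) hd.le hdx]
  calc ∫ x in Ioo (0:ℝ) 1, (A x - B x) ^ 2
      ≤ ∫ x in Ioo (0:ℝ) 1, (2 / d ^ 2 * (L ^ 2 * w ^ 2 + derivDiff A B x ^ 2)
          + S.indicator (fun _ => L ^ 2) x) :=
        integral_mono_of_nonneg (ae_of_all _ fun _ => sq_nonneg _) (Integrable.add hfar hnear) hpt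
    _ = 2 / d ^ 2 * (L ^ 2 * w ^ 2 + ∫ x in Ioo (0:ℝ) 1, derivDiff A B x ^ 2)
          + (volume.restrict (Ioo (0:ℝ) 1)).real S * L ^ 2 := by
        rw [integral_add hfar hnear, integral_const_mul, integral_add (integrable_const _) hE,
          integral_indicator_const _ measurableSet_Ioo, setIntegral_const,
          Real.volume_real_Ioo_of_le zero_le_one]
        simp [S]
    _ ≤ _ := by gcongr

lemma integral_sq_sub_le_rpow (hl : 0 < l) (hA : Measurable A) (hB : Measurable B)
    (hAb : ∀ᵐ x ∂volume.restrict (Ioo (0:ℝ) 1), l ≤ A x ∧ A x ≤ L)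
    (hBb : ∀ᵐ x ∂volume.restrict (Ioo (0:ℝ) 1), l ≤ B x ∧ B x ≤ L) {ρ : ℝ} (hρ : 0 < ρ) :
    ∫ x in Ioo (0:ℝ) 1, (A x - B x) ^ 2 ≤
      (L ^ 2 * ((l ^ 2)⁻¹) ^ ((2:ℝ) / 3) + (4 * L ^ 2) ^ ((1:ℝ) / 3)) / 8 / ρ ^ 2 *
        (∫ x in Ioo (0:ℝ) 1, derivDiff A B x ^ 2) ^ ((2:ℝ) / 3) + 8 * L ^ 2 * ρ := by
  have hAb' := hAb.mono fun _ h => And.intro (hl.le.trans h.1) h.2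
  have hBb' := hBb.mono fun _ h => And.intro (hl.le.trans h.1) h.2
  set I := ∫ x in Ioo (0:ℝ) 1, derivDiff A B x ^ 2
  have hI0 : 0 ≤ I := integral_nonneg fun _ => sq_nonneg _
  have hgap : (gammaOf A - gammaOf B) ^ 2 ≤ ((l ^ 2)⁻¹) ^ ((2:ℝ) / 3) * I ^ ((2:ℝ) / 3) := by
    rw [← sq_abs, ← mul_rpow (by positivity) hI0]
    refine sq_le_rpow_two_thirds_of_pow_three_le (abs_nonneg _) ?_
    rw [inv_mul_eq_div, le_div_iff₀' (by positivity)]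
    exact sq_mul_abs_gammaOf_sub_pow_three_le hl.le hA hB hAb hBb
  have hI := le_rpow_one_third_mul_rpow_two_thirds hI0 (integral_derivDiff_sq_le hA hB hAb' hBb')
  calc ∫ x in Ioo (0:ℝ) 1, (A x - B x) ^ 2
      ≤ 2 / (4 * ρ) ^ 2 * (L ^ 2 * (gammaOf A - gammaOf B) ^ 2 + I) + 2 * (4 * ρ) * L ^ 2 :=
        integral_sq_sub_le (by positivity) hA hB hAb' hBb'
    _ ≤ 2 / (4 * ρ) ^ 2 * (L ^ 2 * (((l ^ 2)⁻¹) ^ ((2:ℝ) / 3) * I ^ ((2:ℝ) / 3))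
          + (4 * L ^ 2) ^ ((1:ℝ) / 3) * I ^ ((2:ℝ) / 3)) + 2 * (4 * ρ) * L ^ 2 := by
        gcongr
    _ = _ := by field_simp; ring

end

/-- Lemma 6.2 of the paper: there is `C = C(λ,Λ) > 0` such that for all coefficients
`a, b` with `λ ≤ a, b ≤ Λ` a.e. on `(0,1)`, writing `A = 1/a`, `B = 1/b`,
`E'(x) = B(x)(x-γ_B) - A(x)(x-γ_A)`, one has for every `ρ > 0`:
`∫₀¹ (A-B)² ≤ (C/ρ²) (∫₀¹ E'²)^{2/3} + 8 λ⁻² ρ`. -/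
theorem stmt3 (lam Lam : ℝ) (hlam : 0 < lam) (hlL : lam ≤ Lam) :
    ∃ C : ℝ, 0 < C ∧
      ∀ a b : ℝ → ℝ, Measurable a → Measurable b →
        (∀ᵐ x ∂(volume.restrict (Ioo (0:ℝ) 1)), lam ≤ a x ∧ a x ≤ Lam) →
        (∀ᵐ x ∂(volume.restrict (Ioo (0:ℝ) 1)), lam ≤ b x ∧ b x ≤ Lam) →
        ∀ ρ : ℝ, 0 < ρ →
          (∫ x in (0:ℝ)..1, (1 / a x - 1 / b x) ^ 2) ≤
            C / ρ ^ 2 * (∫ x in (0:ℝ)..1,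
                ((1 / b x) * (x - gammaOf (fun t => 1 / b t))
                  - (1 / a x) * (x - gammaOf (fun t => 1 / a t))) ^ 2) ^ ((2:ℝ)/3)
              + 8 * (lam ^ 2)⁻¹ * ρ := by
  have hLam : 0 < Lam := hlam.trans_le hlL
  refine ⟨(lam⁻¹ ^ 2 * ((Lam⁻¹ ^ 2)⁻¹) ^ ((2:ℝ) / 3) + (4 * lam⁻¹ ^ 2) ^ ((1:ℝ) / 3)) / 8,
    by positivity, fun a b ha hb hab hbb ρ hρ => ?_⟩
  have inv_bounds {c : ℝ → ℝ}
      (hc : ∀ᵐ x ∂volume.restrict (Ioo (0:ℝ) 1), lam ≤ c x ∧ c x ≤ Lam) :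
      ∀ᵐ x ∂volume.restrict (Ioo (0:ℝ) 1), Lam⁻¹ ≤ 1 / c x ∧ 1 / c x ≤ lam⁻¹ := by
    filter_upwards [hc] with x hx
    rw [one_div]
    exact ⟨inv_anti₀ (hlam.trans_le hx.1) hx.2, inv_anti₀ hlam hx.1⟩
  have h := integral_sq_sub_le_rpow (A := fun t => 1 / a t) (B := fun t => 1 / b t)
    (inv_pos.2 hLam) (by fun_prop) (by fun_prop) (inv_bounds hab) (inv_bounds hbb) hρ
  rw [← inv_pow lam 2]
  simp only [intervalIntegral_eq_setIntegral_Ioo zero_le_one]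
  exact h
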